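/- The logic B(⟨r⟩,k) lacks the finite model property: there exists a formula φ of B(⟨r⟩,k) (namely Inf) such that φ is satisfiable, but there is no Kripke frame M = (W,R) with W finite and no s ∈ W such that M, ∅, s ⊨ φ. -/
import Mathlib


/-- Formulas of the memory logic B(⟨r⟩,k):  F ::= k | ¬F | F ∧ F | ◇F. -/
inductive MForm : Type
  | known : MForm
  | neg : MForm → MForm
  | conj : MForm → MForm → MForm
  | dia : MForm → MForm
deriving DecidableEq

namespace MForm

def disj (φ ψ : MForm) : MForm := neg (conj (neg φ) (neg ψ))
def impl (φ ψ : MForm) : MForm := neg (conj φ (neg ψ))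
def box (φ : MForm) : MForm := neg (dia (neg φ))
def bot : MForm := conj known (neg known)
def top : MForm := disj known (neg known)

end MForm

/-- Satisfaction for B(⟨r⟩,k) on a Kripke frame (W, R), at state `w`, with memory `S`.
`◇` is the remember-and-move operator: the current state is added to the memory. -/
def MSat {W : Type*} (R : W → W → Prop) : Set W → W → MForm → Prop
  | S, w, .known => w ∈ S
  | S, w, .neg φ => ¬ MSat R S w φ
  | S, w, .conj φ ψ => MSat R S w φ ∧ MSat R S w ψ
  | S, w, .dia φ => ∃ t, R w t ∧ MSat R (S ∪ {w}) t φ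

/-- A formula is satisfiable iff it holds at some state of some frame with empty initial memory. -/
def MSatisfiable (φ : MForm) : Prop :=
  ∃ (W : Type) (R : W → W → Prop) (s : W), MSat R ∅ s φ

namespace MForm

/-- The macro s ≡ ◇□⊥ : "the current state sees a dead end". -/
def sees : MForm := dia (box bot)

/-- a-or-b ≡ k ∧ ◇(k ∧ ¬s). -/
def aorb : MForm := conj known (dia (conj known (neg sees)))

/-- c ≡ k ∧ □(k → s). -/
def cmac : MForm := conj known (box (impl known sees))

/-- The formula `Inf`, the conjunction of the seven conjuncts (1)–(7). -/
def infF : MForm :=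
  conj sees <|                                                              -- (1) s
  conj (box (neg sees)) <|                                                  -- (2) □¬s
  conj (box (box (impl known sees))) <|                                     -- (3) □□(k → s)
  conj (dia (dia known)) <|                                                 -- (4) ◇◇k
  conj (box (impl (dia top) (dia (conj (neg known) (neg sees))))) <|        -- (5)
  conj (box (box (impl (neg sees)
        (dia (conj known (conj sees (dia (conj known (box (impl known sees)))))))))) <|  -- (6)
  box (box (impl (neg sees) (box (impl (neg sees)
        (dia (conj known (conj sees (box (impl aorb (dia cmac))))))))))     -- (7)

end MForm

/-- A state `x` "sees a dead end": some successor of `x` has no successor. -/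
def seesDeadEnd {W : Type*} (R : W → W → Prop) (x : W) : Prop :=
  ∃ y, R x y ∧ ∀ z, ¬ R y z

section Aux
variable {W : Type*} {R : W → W → Prop} {S : Set W} {w : W} {φ ψ : MForm}

lemma msat_known : MSat R S w .known ↔ w ∈ S := Iff.rfl
lemma msat_neg : MSat R S w (.neg φ) ↔ ¬ MSat R S w φ := Iff.rfl
lemma msat_conj : MSat R S w (.conj φ ψ) ↔ (MSat R S w φ ∧ MSat R S w ψ) := Iff.rfl
lemma msat_dia : MSat R S w (.dia φ) ↔ ∃ t, R w t ∧ MSat R (S ∪ {w}) t φ := Iff.rfl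

lemma msat_bot : MSat R S w MForm.bot ↔ False := by
  rw [MForm.bot]; simp only [msat_conj, msat_neg, msat_known, iff_false]; tauto

lemma msat_box : MSat R S w (MForm.box φ) ↔ ∀ t, R w t → MSat R (S ∪ {w}) t φ := by
  rw [MForm.box]
  simp only [msat_neg, msat_dia, not_exists, not_and, not_not]

lemma msat_impl : MSat R S w (MForm.impl φ ψ) ↔ (MSat R S w φ → MSat R S w ψ) := by
  rw [MForm.impl]
  simp only [msat_neg, msat_conj, not_and, not_not]

lemma msat_top : MSat R S w MForm.top := by
  rw [MForm.top, MForm.disj]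
  simp only [msat_neg, msat_conj, msat_known]
  tauto

lemma msat_sees : MSat R S w MForm.sees ↔ seesDeadEnd R w := by
  rw [MForm.sees]
  simp only [msat_dia, msat_box, msat_bot, seesDeadEnd, imp_false]

lemma msat_aorb : MSat R S w MForm.aorb ↔
    (w ∈ S ∧ ∃ t, R w t ∧ t ∈ S ∪ {w} ∧ ¬ seesDeadEnd R t) := by
  rw [MForm.aorb]
  simp only [msat_conj, msat_dia, msat_known, msat_neg, msat_sees]

lemma msat_cmac : MSat R S w MForm.cmac ↔
    (w ∈ S ∧ ∀ t, R w t → t ∈ S ∪ {w} → seesDeadEnd R t) := by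
  rw [MForm.cmac]
  simp only [msat_conj, msat_box, msat_impl, msat_known, msat_sees]

end Aux

/-- no finite model carries `infF`. -/
lemma infF_no_finite_model {W : Type} [Finite W] {R : W → W → Prop} {w : W}
    (h : MSat R ∅ w MForm.infF) : False := by
  rw [MForm.infF] at h
  simp only [msat_conj, msat_dia, msat_box, msat_impl, msat_neg, msat_known, msat_sees,
    msat_aorb, msat_cmac, msat_top, Set.empty_union, Set.mem_union, Set.mem_singleton_iff,
    true_implies] at h
  obtain ⟨h1, h2, h3, h4, h5, h6, h7⟩ := h
  -- consequence of (6)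
  have L6 : ∀ t u, R w t → R t u → ¬ seesDeadEnd R u →
      R u w ∧ R w u ∧ ¬ R u t ∧ ¬ R u u := by
    intro t u hwt htu hu
    obtain ⟨v, huv, hvmem, hvsees, x, hvx, hxmem, hx⟩ := h6 t hwt u htu hu
    have hv : v = w := by
      rcases hvmem with (rfl | rfl) | rfl
      · rfl
      · exact absurd hvsees (h2 _ hwt)
      · exact absurd hvsees hu
    rw [hv] at huv hvx hx
    rcases hxmem with ((hxe | hxe) | hxe) | hxe <;> rw [hxe] at hvx hx
    · exact absurd (hx t hwt (by tauto)) (h2 _ hwt)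
    · exact absurd (hx u htu (by tauto)) hu
    · exact ⟨huv, hvx, fun hb => (h2 _ hwt) (hx t hb (by tauto)),
        fun hb => hu (hx u hb (by tauto))⟩
    · rw [hv] at hvx hx
      exact absurd (hx t hwt (by tauto)) (h2 _ hwt)
  -- consequence of (7)
  have L7 : ∀ t u v, R w t → R t u → ¬ seesDeadEnd R u → R u v → ¬ seesDeadEnd R v →
      R t v := by
    intro t u v hwt htu hu huv hv
    obtain ⟨x, hvx, hxmem, hxsees, H⟩ := h7 t hwt u htu hu v huv hv
    have hx : x = w := by
      rcases hxmem with ((rfl | rfl) | rfl) | rfl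
      · rfl
      · exact absurd hxsees (h2 _ hwt)
      · exact absurd hxsees hu
      · exact absurd hxsees hv
    rw [hx] at H
    obtain ⟨y, hty, hymem, hy⟩ := H t hwt ⟨by tauto, u, htu, by tauto, hu⟩
    rcases hymem with ((((hye | hye) | hye) | hye) | hye) | hye <;> rw [hye] at hty hy
    · exact absurd (hy t hwt (by tauto)) (h2 _ hwt)
    · exact absurd (hy u htu (by tauto)) hu
    · exact absurd (hy v huv (by tauto)) hv
    · exact hty
    · exact absurd (hy t hwt (by tauto)) (h2 _ hwt)
    · exact absurd (hy u htu (by tauto)) hu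
  -- starting point: a₁ with R w a₁ and R a₁ w
  obtain ⟨t0, hwt0, u0, ht0u0, hu0⟩ := h4
  have ha1 : ∃ a, R w a ∧ R a w := by
    rcases hu0 with rfl | rfl
    · exact ⟨t0, hwt0, ht0u0⟩
    · exact absurd (h3 u0 hwt0 u0 ht0u0 (Or.inr rfl)) (h2 _ hwt0)
  obtain ⟨a1, hwa1, ha1w⟩ := ha1
  -- the chain
  set P : W → Prop := fun x => R w x ∧ R x w ∧ ¬ seesDeadEnd R x with hPdef
  have hstep : ∀ x, P x → ∃ y, P y ∧ R x y := by
    rintro x ⟨hwx, hxw, hxs⟩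
    obtain ⟨u, hxu, -, hus⟩ := h5 x hwx ⟨w, hxw, trivial⟩
    obtain ⟨huw, hwu, -, -⟩ := L6 x u hwx hxu hus
    exact ⟨u, ⟨hwu, huw, hus⟩, hxu⟩
  have : Nonempty W := ⟨w⟩
  choose! f hf using hstep
  set a : ℕ → W := fun n => f^[n] a1 with hadef
  have hP : ∀ n, P (a n) := by
    intro n
    induction n with
    | zero => exact ⟨hwa1, ha1w, h2 _ hwa1⟩
    | succ n ih =>
      have : a (n+1) = f (a n) := Function.iterate_succ_apply' f n a1
      rw [this]
      exact (hf (a n) ih).1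
  have hEdge : ∀ n, R (a n) (a (n+1)) := by
    intro n
    have : a (n+1) = f (a n) := Function.iterate_succ_apply' f n a1
    rw [this]
    exact (hf (a n) (hP n)).2
  have hChain : ∀ i j, i < j → R (a i) (a j) := by
    intro i j hij
    induction hij with
    | refl => exact hEdge i
    | @step m h ih =>
      exact L7 (a i) (a m) (a (m+1)) (hP i).1 ih (hP m).2.2 (hEdge m) (hP (m+1)).2.2
  have hIrr : ∀ n, ¬ R (a n) (a n) := fun n hb =>
    (L6 (a n) (a n) (hP n).1 hb (hP n).2.2).2.2.2 hb
  have hinj : Function.Injective a := by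
    intro i j hij
    rcases lt_trichotomy i j with hlt | heq | hlt
    · exact absurd (hij ▸ hChain i j hlt) (hIrr j)
    · exact heq
    · exact absurd (hij ▸ hChain j i hlt) (hIrr j)
  obtain ⟨x, y, hxy, heq⟩ := Finite.exists_ne_map_eq_of_infinite a
  exact hxy (hinj heq)
def chainR : ℕ → ℕ → Prop := fun a b => (a = 0 ∧ b ≠ 0) ∨ (2 ≤ a ∧ (b = 0 ∨ a < b))

lemma chain_sd (x : ℕ) : seesDeadEnd chainR x ↔ x = 0 := by
  constructor
  · rintro ⟨y, hxy, hy⟩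
    have h1 : y ≠ 0 := fun h => hy 1 (Or.inl ⟨h, one_ne_zero⟩)
    have h0 : ¬ 2 ≤ y := fun h => hy 0 (Or.inr ⟨h, Or.inl rfl⟩)
    simp only [chainR] at hxy
    omega
  · rintro rfl
    refine ⟨1, Or.inl ⟨rfl, one_ne_zero⟩, fun z hz => ?_⟩
    simp only [chainR] at hz
    omega

lemma infF_sat : MSat chainR ∅ 0 MForm.infF := by
  rw [MForm.infF]
  simp only [msat_conj, msat_dia, msat_box, msat_impl, msat_neg, msat_known, msat_sees,
    msat_aorb, msat_cmac, msat_top, Set.empty_union, Set.mem_union, Set.mem_singleton_iff,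
    true_implies, chain_sd]
  refine ⟨trivial, ?_, ?_, ?_, ?_, ?_, ?_⟩
  · -- (2)
    intro t ht
    simp only [chainR] at ht
    omega
  · -- (3)
    intro t ht u hu hmem
    simp only [chainR] at ht hu
    omega
  · -- (4)
    refine ⟨2, ?_, 0, ?_, Or.inl rfl⟩ <;> simp [chainR]
  · -- (5)
    rintro t ht ⟨z, hz, -⟩
    simp only [chainR] at ht hz
    exact ⟨t + 1, by simp only [chainR]; omega, by omega⟩
  · -- (6)
    intro t ht u htu hu
    simp only [chainR] at ht htu hu ⊢
    exact ⟨0, by omega, by omega, by omega, u, by omega, by omega, fun x hx hmem => by omega⟩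
  · -- (7)
    intro t ht u htu hu v huv hv
    simp only [chainR] at ht htu huv hu hv ⊢
    refine ⟨0, by omega, by omega, by omega, ?_⟩
    rintro x hx ⟨hxmem, z, hxz, hzmem, hz⟩
    exact ⟨v, by omega, by omega, fun y hy hmem => by omega⟩

/-- B(⟨r⟩,k) lacks the finite model property: some (satisfiable) formula,
namely Inf, holds at no state of any finite Kripke frame under the empty initial memory. -/
theorem lacks_finite_model_property :
    ∃ φ : MForm, MSatisfiable φ ∧
      ¬ ∃ (W : Type) (_ : Finite W) (R : W → W → Prop) (s : W), MSat R ∅ s φ := by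
  refine ⟨MForm.infF, ⟨ℕ, chainR, 0, infF_sat⟩, ?_⟩
  rintro ⟨W, hfin, R, s, hs⟩
  exact infF_no_finite_model hs
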